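/- Let F be a Veltman frame, k ≥ 0, and suppose B_k(x_{k+1}, x_0, y_0, y_{k+1}) holds. Let a, c, d_1, …, d_{k+1} be distinct propositional variables. Then there exists a valuation ⊩ on F such that: (1) x_{k+1} ⊩ Ū_{k+1} ∧ (d_{k+1} ▷ a); (2) x ⊩ c iff y_0 S_{x_0} x; (3) x ⊩ a iff x = y_{k+1}; (4) x ⊮ p for any propositional variable p not among a, c, d_1, …, d_{k+1}. -/
import Mathlib


/-- Formulas of interpretability logic: propositional variables, ⊥, →, □, ▷. -/
inductive ILForm : Type
  | var : ℕ → ILForm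
  | bot : ILForm
  | impl : ILForm → ILForm → ILForm
  | box : ILForm → ILForm
  | rhd : ILForm → ILForm → ILForm
  deriving DecidableEq

namespace ILForm

def neg (A : ILForm) : ILForm := impl A bot
def top : ILForm := neg bot
def conj (A B : ILForm) : ILForm := neg (impl A (neg B))
def disj (A B : ILForm) : ILForm := impl (neg A) B
def dia (A : ILForm) : ILForm := neg (box (neg A))

end ILForm

infixr:30 " ⟹ " => ILForm.impl
infixl:65 " ⋀ " => ILForm.conj
infixl:64 " ⋁ " => ILForm.disj
infix:50 " ▷ " => ILForm.rhd
prefix:70 "□" => ILForm.box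
prefix:70 "◇" => ILForm.dia
prefix:70 "∼" => ILForm.neg

/-- Propositional evaluation of a formula, treating boxed and ▷-formulas
(and variables) as atoms evaluated by `g`.  A formula is an instance of a
propositional tautology iff it evaluates to `true` under every such `g`. -/
def ILForm.evalProp (g : ILForm → Bool) : ILForm → Bool
  | .bot => false
  | .impl a b => !(ILForm.evalProp g a) || ILForm.evalProp g b
  | f => g f

/-- Hilbert-style provability in the interpretability logic IL extended with
an additional set `Ax` of axioms. -/
inductive ILProv (Ax : Set ILForm) : ILForm → Prop
  | ax {A : ILForm} : A ∈ Ax → ILProv Ax A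
  | taut {A : ILForm} : (∀ g : ILForm → Bool, A.evalProp g = true) → ILProv Ax A
  | L1 (A B : ILForm) : ILProv Ax ((□(A ⟹ B)) ⟹ ((□A) ⟹ (□B)))
  | L2 (A : ILForm) : ILProv Ax ((□A) ⟹ (□□A))
  | L3 (A : ILForm) : ILProv Ax ((□((□A) ⟹ A)) ⟹ (□A))
  | J1 (A B : ILForm) : ILProv Ax ((□(A ⟹ B)) ⟹ (A ▷ B))
  | J2 (A B C : ILForm) : ILProv Ax (((A ▷ B) ⋀ (B ▷ C)) ⟹ (A ▷ C))
  | J3 (A B C : ILForm) : ILProv Ax (((A ▷ C) ⋀ (B ▷ C)) ⟹ ((A ⋁ B) ▷ C))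
  | J4 (A B : ILForm) : ILProv Ax ((A ▷ B) ⟹ ((◇A) ⟹ (◇B)))
  | J5 (A : ILForm) : ILProv Ax ((◇A) ▷ A)
  | mp {A B : ILForm} : ILProv Ax (A ⟹ B) → ILProv Ax A → ILProv Ax B
  | nec {A : ILForm} : ILProv Ax A → ILProv Ax (□A)

/-- Substitution of formulas for propositional variables. -/
def ILForm.substVar (σ : ℕ → ILForm) : ILForm → ILForm
  | .var n => σ n
  | .bot => .bot
  | .impl a b => .impl (ILForm.substVar σ a) (ILForm.substVar σ b)
  | .box a => .box (ILForm.substVar σ a)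
  | .rhd a b => .rhd (ILForm.substVar σ a) (ILForm.substVar σ b)

/-- All substitution instances of a modal scheme. -/
def instancesOf (A : ILForm) : Set ILForm := {B | ∃ σ : ℕ → ILForm, B = ILForm.substVar σ A}

/-- Helper for simultaneous replacement of subformula occurrences. -/
def ILForm.hit (ps : List (ILForm × ILForm)) (f : ILForm) : Option ILForm :=
  (ps.find? fun pq => decide (pq.1 = f)).map (·.2)

/-- Simultaneous replacement of (outermost) occurrences of the patterns
`p` by the corresponding `q`, for `(p,q)` in the list `ps`. -/
def ILForm.replL (ps : List (ILForm × ILForm)) : ILForm → ILForm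
  | .var n => (ILForm.hit ps (.var n)).getD (.var n)
  | .bot => (ILForm.hit ps .bot).getD .bot
  | .impl a b =>
      (ILForm.hit ps (.impl a b)).getD (.impl (ILForm.replL ps a) (ILForm.replL ps b))
  | .box a => (ILForm.hit ps (.box a)).getD (.box (ILForm.replL ps a))
  | .rhd a b =>
      (ILForm.hit ps (.rhd a b)).getD (.rhd (ILForm.replL ps a) (ILForm.replL ps b))

/-- The placeholder variables `A_n`, `B_n`, `C_n`, `E_n`. -/
def Av (n : ℕ) : ILForm := .var (4*n)
def Bv (n : ℕ) : ILForm := .var (4*n+1)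
def Cv (n : ℕ) : ILForm := .var (4*n+2)
def Ev (n : ℕ) : ILForm := .var (4*n+3)

/-- The slim series `R_n`, defined by the substitutions of the paper:
`R_0 := A_0▷B_0 → ¬(A_0▷¬C_0) ▷ B_0∧□C_0`;
`R_{2n+1} := R_{2n}[¬(A_n▷¬C_n)/¬(A_n▷¬C_n)∧(E_{n+1}▷◇A_{n+1});
                    B_n∧□C_n/B_n∧□C_n∧(E_{n+1}▷A_{n+1})]`;
`R_{2n+2} := R_{2n+1}[B_n/B_n∧(A_{n+1}▷B_{n+1}); ◇A_{n+1}/¬(A_{n+1}▷¬C_{n+1});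
     (E_{n+1}▷A_{n+1})/(E_{n+1}▷A_{n+1})∧(E_{n+1}▷B_{n+1}∧□C_{n+1})]`. -/
def Rser : ℕ → ILForm
  | 0 => (Av 0 ▷ Bv 0) ⟹ ((∼(Av 0 ▷ (∼(Cv 0)))) ▷ ((Bv 0) ⋀ (□(Cv 0))))
  | n+1 =>
    let k := n / 2
    if n % 2 = 0 then
      ILForm.replL
        [ (∼(Av k ▷ (∼(Cv k))), (∼(Av k ▷ (∼(Cv k)))) ⋀ (Ev (k+1) ▷ (◇(Av (k+1))))),
          ((Bv k) ⋀ (□(Cv k)), ((Bv k) ⋀ (□(Cv k))) ⋀ (Ev (k+1) ▷ Av (k+1))) ]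
        (Rser n)
    else
      ILForm.replL
        [ (Bv k, (Bv k) ⋀ (Av (k+1) ▷ Bv (k+1))),
          (◇(Av (k+1)), ∼(Av (k+1) ▷ (∼(Cv (k+1))))),
          (Ev (k+1) ▷ Av (k+1),
            (Ev (k+1) ▷ Av (k+1)) ⋀ (Ev (k+1) ▷ ((Bv (k+1)) ⋀ (□(Cv (k+1)))))) ]
        (Rser n)

/-- The formulas `X_n` of the well-behaved subhierarchy. -/
def Xt (A B : ℕ → ILForm) : ℕ → ILForm
  | 0 => A 0 ▷ B 0
  | n+1 => A (n+1) ▷ ((B (n+1)) ⋀ (Xt A B n))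

/-- The formulas `Y_n` of the well-behaved subhierarchy. -/
def Yt (A C E : ℕ → ILForm) : ℕ → ILForm
  | 0 => ∼(A 0 ▷ (∼(C 0)))
  | n+1 => (∼(A (n+1) ▷ (∼(C (n+1))))) ⋀ (E (n+1) ▷ (Yt A C E n))

/-- The formulas `Z_n` of the well-behaved subhierarchy. -/
def Zt (A B C E : ℕ → ILForm) : ℕ → ILForm
  | 0 => (B 0) ⋀ (□(C 0))
  | n+1 => (((B (n+1)) ⋀ (Xt A B n)) ⋀ (□(C (n+1)))) ⋀
             ((E (n+1) ▷ A n) ⋀ (E (n+1) ▷ (Zt A B C E n)))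

/-- The principles `R̃_n = X_n → Y_n ▷ Z_n`. -/
def Rtilde (A B C E : ℕ → ILForm) (n : ℕ) : ILForm :=
  (Xt A B n) ⟹ ((Yt A C E n) ▷ (Zt A B C E n))

/-- `X_{k-1}`, with the convention `X_{-1} = ⊤`. -/
def Xminus (A B : ℕ → ILForm) : ℕ → ILForm
  | 0 => ILForm.top
  | n+1 => Xt A B n

/-- `A_{k-1}`, with the convention `A_{-1} = ⊤`. -/
def Aminus (A : ℕ → ILForm) : ℕ → ILForm
  | 0 => ILForm.top
  | n+1 => A n

/-- `Z_{k-1}`, with the convention `Z_{-1} = ⊤`. -/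
def Zminus (A B C E : ℕ → ILForm) : ℕ → ILForm
  | 0 => ILForm.top
  | n+1 => Zt A B C E n

/-- Veltman frames. -/
structure Veltman where
  W : Type
  ne : Nonempty W
  R : W → W → Prop
  S : W → W → W → Prop
  R_trans : ∀ {x y z}, R x y → R y z → R x z
  R_cwf : WellFounded (fun x y => R y x)
  S_dom : ∀ {x y z}, S x y z → R x y ∧ R x z
  S_refl : ∀ {x y}, R x y → S x y y
  S_trans : ∀ {x y z u}, S x y z → S x z u → S x y u
  R_sub_S : ∀ {x y z}, R x y → R y z → S x y z

/-- Forcing in a Veltman model. -/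
def force (F : Veltman) (V : ℕ → F.W → Prop) : ILForm → F.W → Prop
  | .var n => fun w => V n w
  | .bot => fun _ => False
  | .impl a b => fun w => force F V a w → force F V b w
  | .box a => fun w => ∀ v, F.R w v → force F V a v
  | .rhd a b => fun w => ∀ v, F.R w v → force F V a v →
      ∃ u, F.S w v u ∧ force F V b u

/-- A formula is valid on a frame if it is forced at every world under every valuation. -/
def valid (F : Veltman) (A : ILForm) : Prop := ∀ (V : ℕ → F.W → Prop) (w : F.W), force F V A w

/-- The `C`-assuring successor relation `x R^C_⊩ y`. -/
def RC (F : Veltman) (V : ℕ → F.W → Prop) (C : ILForm) (x y : F.W) : Prop :=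
  F.R x y ∧ force F V C y ∧ ∀ z, F.S x y z → force F V C z

/-- The ternary relations `G_n` on a Veltman frame. -/
def G (F : Veltman) : ℕ → F.W → F.W → F.W → Prop
  | 0 => fun x y z => ∀ u, F.R z u → F.S x y u
  | n+1 => fun x y z => ∀ u, F.R z u → F.S x y u ∧ ∀ v, F.S x u v → G F n z u v

/-- The frame conditions `F_n` of the slim hierarchy. -/
def Fcond (F : Veltman) (n : ℕ) : Prop :=
  ∀ w x y z, F.R w x → F.R x y → F.S w y z → G F n x y z

/-- The quaternary relations `B_n` on a Veltman frame. -/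
def Bq (F : Veltman) : ℕ → F.W → F.W → F.W → F.W → Prop
  | 0 => fun x1 x0 y0 y1 => F.R x1 x0 ∧ F.R x0 y0 ∧ F.S x1 y0 y1
  | n+1 => fun x' x0 y0 y' => ∃ xn yn, F.R x' xn ∧ Bq F n xn x0 y0 yn ∧ F.S x' yn y'

/-- The formulas `U_n` of the broad series (with `U_0 := ⊤`, unused). -/
def Ubr (C : ILForm) (D : ℕ → ILForm) : ℕ → ILForm
  | 0 => ILForm.top
  | 1 => ◇(∼(D 1 ▷ (∼C)))
  | n+2 => ◇(((D (n+1)) ▷ (D (n+2))) ⋀ (Ubr C D (n+1)))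

/-- The frame conditions `F^n` of the broad series. -/
def FbroadCond (F : Veltman) (n : ℕ) : Prop :=
  ∀ x1 x0 y0 y1, Bq F n x1 x0 y0 y1 → ∀ u, F.R y1 u → F.S x0 y0 u

/-- The principles `R^n` of the broad series. -/
def Rbroad (A B C : ILForm) (D : ℕ → ILForm) : ℕ → ILForm
  | 0 => (A ▷ B) ⟹ ((∼(A ▷ (∼C))) ▷ (B ⋀ (□C)))
  | n+1 => (A ▷ B) ⟹ (((Ubr C D (n+1)) ⋀ (D (n+1) ▷ A)) ▷ (B ⋀ (□C)))

lemma force_conj (F : Veltman) (V : ℕ → F.W → Prop) (A B : ILForm) (w : F.W) :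
    force F V (A ⋀ B) w ↔ force F V A w ∧ force F V B w := by
  simp only [ILForm.conj, ILForm.neg, force]
  tauto

lemma force_dia (F : Veltman) (V : ℕ → F.W → Prop) (A : ILForm) (w : F.W) :
    force F V (◇A) w ↔ ∃ v, F.R w v ∧ force F V A v := by
  simp only [ILForm.dia, ILForm.neg, force]
  constructor
  · intro h
    by_contra hc
    push_neg at hc
    exact h fun v hv ha => hc v hv ha
  · rintro ⟨v, hv, ha⟩ h
    exact h v hv ha

lemma bq_chain (F : Veltman) (x0 y0 : F.W) :
    ∀ k x1 y1, Bq F k x1 x0 y0 y1 →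
      ∃ X Y : ℕ → F.W, X 0 = x0 ∧ Y 0 = y0 ∧ X (k+1) = x1 ∧ Y (k+1) = y1 ∧
        F.R x0 y0 ∧ (∀ i, i ≤ k → F.R (X (i+1)) (X i)) ∧
        (∀ i, i ≤ k → F.S (X (i+1)) (Y i) (Y (i+1))) := by
  intro k
  induction k with
  | zero =>
    rintro x1 y1 ⟨h1, h2, h3⟩
    refine ⟨fun i => if i = 0 then x0 else x1, fun i => if i = 0 then y0 else y1,
      rfl, rfl, rfl, rfl, h2, ?_, ?_⟩ <;>
    · intro i hi
      interval_cases i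
      simp [h1, h3]
  | succ k ih =>
    rintro x1 y1 ⟨xn, yn, hR, hB, hS⟩
    obtain ⟨X, Y, hX0, hY0, hXk, hYk, hxy, hRc, hSc⟩ := ih xn yn hB
    refine ⟨fun i => if i ≤ k+1 then X i else x1, fun i => if i ≤ k+1 then Y i else y1,
      ?_, ?_, ?_, ?_, hxy, ?_, ?_⟩
    · simp [hX0]
    · simp [hY0]
    · simp
    · simp
    · intro i hi
      rcases Nat.lt_or_ge i (k+1) with h | h
      · have h1 : i + 1 ≤ k + 1 := h
        have h2 : i ≤ k + 1 := le_of_lt h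
        simp only [h1, h2, if_true]
        exact hRc i (Nat.lt_succ_iff.mp h)
      · have he : i = k + 1 := le_antisymm hi h
        subst he
        have h1 : ¬(k + 1 + 1 ≤ k + 1) := by omega
        simp only [h1, if_false, le_refl, if_true, hXk]
        exact hR
    · intro i hi
      rcases Nat.lt_or_ge i (k+1) with h | h
      · have h1 : i + 1 ≤ k + 1 := h
        have h2 : i ≤ k + 1 := le_of_lt h
        simp only [h1, h2, if_true]
        exact hSc i (Nat.lt_succ_iff.mp h)
      · have he : i = k + 1 := le_antisymm hi h
        subst he
        have h1 : ¬(k + 1 + 1 ≤ k + 1) := by omega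
        simp only [h1, if_false, le_refl, if_true, hYk]
        exact hS

/-- given `B_k(x_{k+1},x₀,y₀,y_{k+1})` and distinct propositional
variables `a := var 0`, `c := var 1`, `d_i := var (i+1)`, there is a valuation with
(1) `x_{k+1} ⊩ Ū_{k+1} ∧ (d_{k+1} ▷ a)`; (2) `x ⊩ c ↔ y₀ S_{x₀} x`;
(3) `x ⊩ a ↔ x = y_{k+1}`; (4) no other variable is forced anywhere. -/
theorem stmt14 (F : Veltman) (k : ℕ) (x1 x0 y0 y1 : F.W)
    (h : Bq F k x1 x0 y0 y1) :
    ∃ V : ℕ → F.W → Prop,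
      force F V ((Ubr (ILForm.var 1) (fun i => ILForm.var (i+1)) (k+1)) ⋀
                  ((ILForm.var (k+2)) ▷ (ILForm.var 0))) x1 ∧
      (∀ x : F.W, force F V (ILForm.var 1) x ↔ F.S x0 y0 x) ∧
      (∀ x : F.W, force F V (ILForm.var 0) x ↔ x = y1) ∧
      (∀ p : ℕ, k+2 < p → ∀ x : F.W, ¬ force F V (ILForm.var p) x) := by
  obtain ⟨X, Y, hX0, hY0, hXk, hYk, hxy, hRc, hSc⟩ := bq_chain F x0 y0 k x1 y1 h
  refine ⟨fun p x => match p with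
    | 0 => x = Y (k+1)
    | 1 => F.S x0 y0 x
    | p+2 => p ≤ k ∧ x = Y p, ?_, ?_, ?_, ?_⟩
  · set V : ℕ → F.W → Prop := fun p x => match p with
      | 0 => x = Y (k+1)
      | 1 => F.S x0 y0 x
      | p+2 => p ≤ k ∧ x = Y p with hV
    rw [force_conj]
    constructor
    · -- Ū_{k+1} at x1 = X (k+1)
      rw [← hXk]
      have key : ∀ n, n ≤ k →
          force F V (Ubr (ILForm.var 1) (fun i => ILForm.var (i+1)) (n+1)) (X (n+1)) := by
        intro n
        induction n with
        | zero =>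
          intro _
          show force F V (◇(∼(ILForm.var 2 ▷ (∼(ILForm.var 1))))) (X 1)
          rw [force_dia]
          refine ⟨X 0, hRc 0 (Nat.zero_le _), ?_⟩
          intro hall
          obtain ⟨u, hu, hnu⟩ := hall y0 (by rw [hX0]; exact hxy)
            (by exact ⟨Nat.zero_le _, hY0.symm⟩)
          rw [hX0] at hu
          exact hnu hu
        | succ n ih =>
          intro hn
          show force F V (◇((ILForm.var (n+2) ▷ ILForm.var (n+3)) ⋀
            (Ubr (ILForm.var 1) (fun i => ILForm.var (i+1)) (n+1)))) (X (n+2))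
          rw [force_dia]
          refine ⟨X (n+1), hRc (n+1) hn, ?_⟩
          rw [force_conj]
          refine ⟨?_, ih (Nat.le_of_succ_le hn)⟩
          intro v _ hv
          obtain ⟨-, rfl⟩ : n ≤ k ∧ v = Y n := hv
          exact ⟨Y (n+1), hSc n (Nat.le_of_succ_le hn), hn, rfl⟩
      exact key k (le_refl k)
    · -- var (k+2) ▷ var 0 at x1
      intro v _ hv
      obtain ⟨-, rfl⟩ : k ≤ k ∧ v = Y k := hv
      refine ⟨Y (k+1), ?_, rfl⟩
      rw [← hXk]
      exact hSc k (le_refl k)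
  · intro x; exact Iff.rfl
  · intro x
    show x = Y (k+1) ↔ x = y1
    rw [hYk]
  · intro p hp x hx
    match p, hp with
    | p+2, hp =>
      exact absurd hx.1 (by omega)
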